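/- Fix an integer n ≥ 1, a set S ⊆ {0,…,n−1} of intervened nodes, a real r ≥ 0, and two weight matrices θ′ and θ″ satisfying |θ′(j,i) − θ″(j,i)| ≤ n·r for all j, i. Then for every node i ∈ {0,…,n−1}, |μ[θ′,S](i) − μ[θ″,S](i)| ≤ (i+1)·n²·r; in particular this difference is at most n³·r. -/

import Mathlib

/-!
Write `Δᵢ = μ′ᵢ − μ″ᵢ`. Means of a weight matrix lie in `[-1, 1]`, and
`θ′μ′ − θ″μ″ = (θ′ − θ″)μ′ + θ″(μ′ − μ″)`, so summing over the parents of `i` gives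
`|Δᵢ| ≤ i·ε + (∑ⱼ θ″ⱼᵢ)·maxⱼ<ᵢ |Δⱼ| ≤ n·ε + maxⱼ<ᵢ |Δⱼ|` for entrywise closeness `ε`.
Strong induction yields `|Δᵢ| ≤ (i+1)·n·ε`, and `ε = n·r` gives the claim.
-/

open Finset

namespace BLM

def IsInterventionalMean (S : Finset ℕ) (θ : ℕ → ℕ → ℝ) (m : ℕ → ℝ) : Prop :=
  ∀ i, m i = if i = 0 ∨ i ∈ S then 1 else ∑ j ∈ range i, θ j i * m j

lemma sum_range_le_one_of_le {θ : ℕ → ℕ → ℝ} {n k : ℕ} (h0 : ∀ j i, 0 ≤ θ j i)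
    (hsum : ∀ i, ∑ j ∈ range n, θ j i ≤ 1) (hk : k ≤ n) (i : ℕ) :
    ∑ j ∈ range k, θ j i ≤ 1 :=
  (sum_le_sum_of_subset_of_nonneg (range_subset_range.mpr hk) fun j _ _ => h0 j i).trans
    (hsum i)

lemma abs_mul_sub_mul_le {a a' b b' ε δ : ℝ} (ha : |a - a'| ≤ ε) (hb : |b| ≤ 1)
    (ha' : 0 ≤ a') (hb' : |b - b'| ≤ δ) : |a * b - a' * b'| ≤ ε + a' * δ :=
  calc |a * b - a' * b'| = |(a - a') * b + a' * (b - b')| := by ring_nf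
    _ ≤ |a - a'| * |b| + a' * |b - b'| := by
      rw [← abs_mul, ← abs_of_nonneg ha', ← abs_mul, abs_of_nonneg ha']
      exact abs_add_le _ _
    _ ≤ ε * 1 + a' * δ := by
      gcongr
      exact (abs_nonneg _).trans ha
    _ = ε + a' * δ := by ring

namespace IsInterventionalMean

variable {S : Finset ℕ} {n : ℕ}

lemma abs_le_one {θ : ℕ → ℕ → ℝ} {m : ℕ → ℝ} (hm : IsInterventionalMean S θ m)
    (h0 : ∀ j i, 0 ≤ θ j i) (hsum : ∀ i, ∑ j ∈ range n, θ j i ≤ 1) :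
    ∀ i < n, |m i| ≤ 1 := by
  intro i
  induction i using Nat.strong_induction_on with
  | _ i ih =>
    intro hi
    rw [hm i]
    split_ifs
    · simp
    · calc |∑ j ∈ range i, θ j i * m j| ≤ ∑ j ∈ range i, θ j i * |m j| := by
            refine (abs_sum_le_sum_abs _ _).trans_eq (sum_congr rfl fun j _ => ?_)
            rw [abs_mul, abs_of_nonneg (h0 j i)]
        _ ≤ ∑ j ∈ range i, θ j i := by
            refine sum_le_sum fun j hj => ?_
            have hji := mem_range.mp hj
            exact mul_le_of_le_one_right (h0 j i) (ih j hji (hji.trans hi))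
        _ ≤ 1 := sum_range_le_one_of_le h0 hsum hi.le i

lemma abs_sub_le {θ' θ'' : ℕ → ℕ → ℝ} {m' m'' : ℕ → ℝ} {ε : ℝ}
    (hm' : IsInterventionalMean S θ' m') (hm'' : IsInterventionalMean S θ'' m'')
    (hb : ∀ j < n, |m' j| ≤ 1) (h0 : ∀ j i, 0 ≤ θ'' j i)
    (hsum : ∀ i, ∑ j ∈ range n, θ'' j i ≤ 1) (hε : ∀ j i, |θ' j i - θ'' j i| ≤ ε) :
    ∀ i < n, |m' i - m'' i| ≤ (i + 1) * n * ε := by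
  have hε0 : 0 ≤ ε := (abs_nonneg _).trans (hε 0 0)
  intro i
  induction i using Nat.strong_induction_on with
  | _ i ih =>
    intro hi
    have hin : (i : ℝ) ≤ n := by exact_mod_cast hi.le
    rw [hm' i, hm'' i]
    split_ifs
    · simp only [sub_self, abs_zero]
      positivity
    · have hterm : ∀ j ∈ range i,
          |θ' j i * m' j - θ'' j i * m'' j| ≤ ε + θ'' j i * (i * n * ε) := by
        intro j hj
        have hji := mem_range.mp hj
        have hji' : (j : ℝ) + 1 ≤ i := by exact_mod_cast hji
        refine abs_mul_sub_mul_le (hε j i) (hb j (hji.trans hi)) (h0 j i) ?_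
        exact (ih j hji (hji.trans hi)).trans (by gcongr)
      calc |∑ j ∈ range i, θ' j i * m' j - ∑ j ∈ range i, θ'' j i * m'' j|
          ≤ ∑ j ∈ range i, |θ' j i * m' j - θ'' j i * m'' j| := by
            rw [← sum_sub_distrib]
            exact abs_sum_le_sum_abs _ _
        _ ≤ ∑ j ∈ range i, (ε + θ'' j i * (i * n * ε)) := sum_le_sum hterm
        _ = i * ε + (∑ j ∈ range i, θ'' j i) * (i * n * ε) := by
            rw [sum_add_distrib, sum_const, card_range, nsmul_eq_mul, sum_mul]
        _ ≤ n * ε + 1 * (i * n * ε) := by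
            gcongr
            exact sum_range_le_one_of_le h0 hsum hi.le i
        _ = (i + 1) * n * ε := by ring

end IsInterventionalMean

end BLM

open BLM in
theorem blm_close_weights_close_means_general
    (n : ℕ)
    (S : Finset ℕ)
    (r : ℝ) (hr : 0 ≤ r)
    (θ' θ'' : ℕ → ℕ → ℝ)
    (hθ'0 : ∀ j i, 0 ≤ θ' j i)
    (hθ'sum : ∀ i, ∑ j ∈ Finset.range n, θ' j i ≤ 1)
    (hθ''0 : ∀ j i, 0 ≤ θ'' j i)
    (hθ''sum : ∀ i, ∑ j ∈ Finset.range n, θ'' j i ≤ 1)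
    (hclose : ∀ j i, |θ' j i - θ'' j i| ≤ (n : ℝ) * r)
    (m' m'' : ℕ → ℝ)
    (hm' : ∀ i, m' i = if i = 0 ∨ i ∈ S then 1
      else ∑ j ∈ Finset.range i, θ' j i * m' j)
    (hm'' : ∀ i, m'' i = if i = 0 ∨ i ∈ S then 1
      else ∑ j ∈ Finset.range i, θ'' j i * m'' j) :
    ∀ i < n, |m' i - m'' i| ≤ ((i : ℝ) + 1) * (n : ℝ) ^ 2 * r ∧
      |m' i - m'' i| ≤ (n : ℝ) ^ 3 * r := by
  intro i hi
  have hb := IsInterventionalMean.abs_le_one hm' hθ'0 hθ'sum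
  have hclose_means : |m' i - m'' i| ≤ ((i : ℝ) + 1) * n ^ 2 * r :=
    (IsInterventionalMean.abs_sub_le hm' hm'' hb hθ''0 hθ''sum hclose i hi).trans_eq (by ring)
  refine ⟨hclose_means, hclose_means.trans ?_⟩
  have hin : (i : ℝ) + 1 ≤ n := by exact_mod_cast hi
  calc ((i : ℝ) + 1) * n ^ 2 * r ≤ n * n ^ 2 * r := by gcongr
    _ = n ^ 3 * r := by ring

/-- Claim 2 in the proof of Lemma 7: if two weight matrices of a noiseless BLM
(on the same graph nodes, in topological order) differ entrywise by at most
`n·r`, then their interventional means differ by at most `(i+1)·n²·r ≤ n³·r`.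

Here `m'` (resp. `m''`) is the interventional mean vector of the model with
weight matrix `θ'` (resp. `θ''`), characterized by the strong recursion
`m i = 1` if `i = 0` or `i ∈ S`, and `m i = ∑_{j<i} θ j i · m j` otherwise. -/
theorem blm_close_weights_close_means
    (n : ℕ) (hn : 1 ≤ n)
    (S : Finset ℕ) (hS : ∀ s ∈ S, s < n)
    (r : ℝ) (hr : 0 ≤ r)
    (θ' θ'' : ℕ → ℕ → ℝ)
    (hθ'0 : ∀ j i, 0 ≤ θ' j i)
    (hθ'tri : ∀ j i, ¬ j < i → θ' j i = 0)
    (hθ'sum : ∀ i, ∑ j ∈ Finset.range n, θ' j i ≤ 1)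
    (hθ''0 : ∀ j i, 0 ≤ θ'' j i)
    (hθ''tri : ∀ j i, ¬ j < i → θ'' j i = 0)
    (hθ''sum : ∀ i, ∑ j ∈ Finset.range n, θ'' j i ≤ 1)
    (hclose : ∀ j i, |θ' j i - θ'' j i| ≤ (n : ℝ) * r)
    (m' m'' : ℕ → ℝ)
    (hm' : ∀ i, m' i = if i = 0 ∨ i ∈ S then 1
      else ∑ j ∈ Finset.range i, θ' j i * m' j)
    (hm'' : ∀ i, m'' i = if i = 0 ∨ i ∈ S then 1
      else ∑ j ∈ Finset.range i, θ'' j i * m'' j) :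
    ∀ i < n, |m' i - m'' i| ≤ ((i : ℝ) + 1) * (n : ℝ) ^ 2 * r ∧
      |m' i - m'' i| ≤ (n : ℝ) ^ 3 * r :=
  blm_close_weights_close_means_general n S r hr θ' θ'' hθ'0 hθ'sum hθ''0 hθ''sum hclose m' m'' hm'
    hm''
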